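/- Let γ : [0,ℓ] → [0,1]^n be a regular d-path from 0ₙ to 1ₙ. Then its L₁-arc length function L : [0,ℓ] → [0,n], L(t) = d₁(0ₙ, γ(t)), is a nondecreasing homeomorphism from [0,ℓ] onto [0,n], i.e. an element of 𝒢(ℓ,n). -/

import Mathlib

open Set

noncomputable section

/-- Moore composition of two paths, switching at time `ℓ₁`. -/
def mooreComp {U : Type*} (ℓ₁ : ℝ) (γ₁ γ₂ : ℝ → U) : ℝ → U :=
  fun t => if t ≤ ℓ₁ then γ₁ t else γ₂ (t - ℓ₁)

/-- A path `γ : [0,ℓ] → U` is regular if it is constant on no nondegenerate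
subinterval of `[0,ℓ]` (equivalently, it has no stop interval). -/
def IsRegularOn {U : Type*} (γ : ℝ → U) (ℓ : ℝ) : Prop :=
  ∀ a b : ℝ, 0 ≤ a → a < b → b ≤ ℓ → ∃ s ∈ Icc a b, ∃ t ∈ Icc a b, γ s ≠ γ t

/-- `𝒢(a,b)`: nondecreasing homeomorphisms from `[0,a]` to `[0,b]`, encoded as
functions `ℝ → ℝ` which are strictly monotone and continuous on `[0,a]` and map
`[0,a]` onto `[0,b]`. -/
def GSet (a b : ℝ) : Set (ℝ → ℝ) :=
  {φ | StrictMonoOn φ (Icc 0 a) ∧ ContinuousOn φ (Icc 0 a) ∧ φ '' Icc 0 a = Icc 0 b}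

/-- The `L₁`-distance on `[0,1]ⁿ` (defined on all of `ℝⁿ`). -/
def d1 {n : ℕ} (x y : Fin n → ℝ) : ℝ := ∑ i, |x i - y i|

/-- A d-path of length `ℓ` of the `n`-cube: a map continuous on `[0,ℓ]`,
nondecreasing in each coordinate, with values in `[0,1]ⁿ`. -/
def IsDPath (n : ℕ) (ℓ : ℝ) (γ : ℝ → Fin n → ℝ) : Prop :=
  ContinuousOn γ (Icc 0 ℓ) ∧ (∀ i, MonotoneOn (fun t => γ t i) (Icc 0 ℓ)) ∧
    ∀ t ∈ Icc (0:ℝ) ℓ, ∀ i, γ t i ∈ Icc (0:ℝ) 1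

/-- A regular d-path of length `ℓ` from `0ₙ` to `1ₙ`. -/
def IsRegFromTo (n : ℕ) (ℓ : ℝ) (r : ℝ → Fin n → ℝ) : Prop :=
  IsDPath n ℓ r ∧ IsRegularOn r ℓ ∧ r 0 = (fun _ => 0) ∧ r ℓ = (fun _ => 1)

/-- A natural d-path of the `n`-cube from `0ₙ` to `1ₙ`: a d-path of length `n`
whose `L₁`-arc length function is the identity. -/
def IsNaturalP (n : ℕ) (δ : ℝ → Fin n → ℝ) : Prop :=
  IsDPath n (n : ℝ) δ ∧ δ 0 = (fun _ => 0) ∧ δ (n : ℝ) = (fun _ => 1) ∧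
    ∀ t ∈ Icc (0:ℝ) (n : ℝ), d1 (δ 0) (δ t) = t

/-!
Since `γ` is coordinatewise nondecreasing, `γ 0 ≤ γ t`, so the `L₁`-arc length is
`L t = ∑ᵢ γ t i - ∑ᵢ γ 0 i`. Regularity upgrades the monotonicity of `γ` (for the product
order) to strict monotonicity, and the coordinate sum is strictly monotone for that order, so
`L` is strictly monotone. Being continuous, `L` maps `[0,ℓ]` onto `[L 0, L ℓ] = [0,n]`.
-/

theorem MonotoneOn.strictMonoOn_of_isRegularOn {α : Type*} [PartialOrder α] {γ : ℝ → α}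
    {ℓ : ℝ} (hγ : MonotoneOn γ (Icc 0 ℓ)) (hreg : IsRegularOn γ ℓ) :
    StrictMonoOn γ (Icc 0 ℓ) := by
  intro s hs t ht hst
  refine (hγ hs ht hst.le).lt_of_ne fun heq => ?_
  have hconst : ∀ u ∈ Icc s t, γ u = γ s := fun u hu =>
    have hu' : u ∈ Icc 0 ℓ := ⟨hs.1.trans hu.1, hu.2.trans ht.2⟩
    le_antisymm (heq ▸ hγ hu' ht hu.2) (hγ hs hu' hu.1)
  obtain ⟨a, ha, b, hb, hab⟩ := hreg s t hs.1 hst ht.2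
  exact hab ((hconst a ha).trans (hconst b hb).symm)

theorem d1_eq_sum_sub_sum_of_le {n : ℕ} {x y : Fin n → ℝ} (hxy : x ≤ y) :
    d1 x y = ∑ i, y i - ∑ i, x i := by
  rw [d1, ← Finset.sum_sub_distrib]
  exact Finset.sum_congr rfl fun i _ => by rw [abs_sub_comm, abs_of_nonneg (sub_nonneg.2 (hxy i))]

theorem continuous_d1_right {n : ℕ} (x : Fin n → ℝ) : Continuous (d1 x) := by
  unfold d1
  fun_prop

theorem d1_self {n : ℕ} (x : Fin n → ℝ) : d1 x x = 0 := by
  simp [d1]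

theorem d1_zero_one {n : ℕ} : d1 (fun _ : Fin n => (0 : ℝ)) (fun _ => 1) = n := by
  simp [d1]

theorem strictMonoOn_d1_of_isRegularOn {n : ℕ} {ℓ : ℝ} {γ : ℝ → Fin n → ℝ}
    (hγ : MonotoneOn γ (Icc 0 ℓ)) (hreg : IsRegularOn γ ℓ) :
    StrictMonoOn (fun t => d1 (γ 0) (γ t)) (Icc 0 ℓ) := by
  intro s hs t ht hst
  have h0 : (0 : ℝ) ∈ Icc 0 ℓ := ⟨le_rfl, hs.1.trans hs.2⟩
  dsimp only
  rw [d1_eq_sum_sub_sum_of_le (hγ h0 hs hs.1), d1_eq_sum_sub_sum_of_le (hγ h0 ht ht.1)]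
  exact sub_lt_sub_right (Fintype.sum_strictMono (hγ.strictMonoOn_of_isRegularOn hreg hs ht hst)) _

/-- The `L₁`-arc length function of a regular d-path from `0ₙ` to `1ₙ` is a
nondecreasing homeomorphism from `[0,ℓ]` onto `[0,n]`, i.e. an element of
`𝒢(ℓ,n)`. -/
theorem stmt9 {n : ℕ} (ℓ : ℝ) (hℓ : 0 < ℓ) (γ : ℝ → Fin n → ℝ)
    (h : IsRegFromTo n ℓ γ) :
    (fun t => d1 (γ 0) (γ t)) ∈ GSet ℓ (n : ℝ) := by
  obtain ⟨⟨hc, hm, -⟩, hreg, h0, h1⟩ := h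
  have hmono : MonotoneOn γ (Icc 0 ℓ) := fun s hs t ht hst i => hm i hs ht hst
  have hstrict := strictMonoOn_d1_of_isRegularOn hmono hreg
  have hcont : ContinuousOn (fun t => d1 (γ 0) (γ t)) (Icc 0 ℓ) :=
    (continuous_d1_right _).comp_continuousOn hc
  refine ⟨hstrict, hcont, ?_⟩
  rw [hcont.image_Icc_of_monotoneOn hℓ.le hstrict.monotoneOn, d1_self, h0, h1, d1_zero_one]
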